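/- arXiv:1111.1991 — 3 statements merged into one kernel-verified Lean document; each statement's English description precedes it below -/
import Mathlib

section
/- For every ρ > 1, the convex hull of R_∞(ρ, 2π/3) equals the convex hull of the four points v₁ = 1/(ρ−1), v₂ = e^{−2πi/3}/(ρ−1), v₃ = e^{−2πi/3}/ρ + e^{−4πi/3}/(ρ(ρ−1)), v₄ = e^{−4πi/3}/(ρ(ρ−1)). -/
open Real

/-- The asymptotic reachable set. -/
noncomputable def Rinf (ρ ω : ℝ) : Set ℂ :=
  {z | ∃ u v : ℕ → ℝ, (∀ j, u j = 0 ∨ u j = 1) ∧ (∀ j, v j = 0 ∨ v j = 1) ∧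
    z = ∑' j : ℕ,
      ((u (j + 1) / ρ ^ (j + 1) : ℝ) : ℂ) *
        Complex.exp (-Complex.I * ((ω * ∑ n ∈ Finset.range (j + 1), v (n + 1) : ℝ) : ℂ))}

/-!
Write `ζ = e^{-2πi/3}` and `K` for the hull of the four points. A point of `R_∞` is
`∑ u_j ρ^{-j} ζ^{k_j}` along a phase path `k_0 = 0`, `k_{j+1} - k_j ∈ {0, 1}`, so `R_∞` is the
attractor of the maps `z ↦ ρ⁻¹ ζ^t (u + z)`, `t, u ∈ {0, 1}`, and `K` is mapped into itself by each
of them. For a real functional `f` this says that the support values of `f` on the rotated hulls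
`ζ^k K` form a nonnegative supersolution of the Bellman inequality along every phase path, which
bounds `f` on `R_∞` by its maximum on the vertices; Hahn–Banach then puts `R_∞` inside `K`.
Conversely each vertex is itself a point of `R_∞`, reached along a path whose phase stops at
`0`, `1` or `2`.
-/

theorem mem_convexHull_of_forall_exists_le {E : Type*} [TopologicalSpace E] [AddCommGroup E]
    [Module ℝ E] [IsTopologicalAddGroup E] [ContinuousSMul ℝ E] [LocallyConvexSpace ℝ E]
    [T2Space E] {s : Set E} (hs : s.Finite) {x : E}
    (h : ∀ f : StrongDual ℝ E, ∃ y ∈ s, f x ≤ f y) : x ∈ convexHull ℝ s := by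
  by_contra hx
  obtain ⟨f, t, hft, htx⟩ :=
    geometric_hahn_banach_closed_point (convex_convexHull ℝ s) (hs.isClosed_convexHull ℝ) hx
  obtain ⟨y, hy, hxy⟩ := h f
  exact (hft y (subset_convexHull ℝ s hy)).not_ge (htx.le.trans hxy)

theorem sum_range_div_pow_add_le {ρ : ℝ} {a V : ℕ → ℝ} (hρ : 0 < ρ)
    (hstep : ∀ n, a n + V (n + 1) ≤ ρ * V n) (n : ℕ) :
    ∑ j ∈ Finset.range n, a j / ρ ^ (j + 1) + V n / ρ ^ n ≤ V 0 := by
  induction n with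
  | zero => simp
  | succ n ih =>
    have hstep' : (a n + V (n + 1)) / ρ ^ (n + 1) ≤ V n / ρ ^ n := by
      rw [div_le_div_iff₀ (by positivity) (by positivity), pow_succ]
      nlinarith [hstep n, pow_pos hρ n]
    rw [Finset.sum_range_succ]
    linarith [add_div (a n) (V (n + 1)) (ρ ^ (n + 1))]

theorem le_of_hasSum_div_pow {ρ s : ℝ} {a V : ℕ → ℝ} (hρ : 0 < ρ) (hV : ∀ n, 0 ≤ V n)
    (hstep : ∀ n, a n + V (n + 1) ≤ ρ * V n) (hs : HasSum (fun j => a j / ρ ^ (j + 1)) s) :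
    s ≤ V 0 :=
  le_of_tendsto' hs.tendsto_sum_nat fun n => by
    linarith [sum_range_div_pow_add_le hρ hstep n, div_nonneg (hV n) (pow_pos hρ n).le]

noncomputable def ζ : ℂ := Complex.exp (-Complex.I * ((2 * π / 3 : ℝ) : ℂ))

theorem isPrimitiveRoot_ζ : IsPrimitiveRoot ζ 3 := by
  have h := (Complex.isPrimitiveRoot_exp 3 (by norm_num)).inv
  rwa [← Complex.exp_neg, show -(2 * π * Complex.I / (3 : ℕ)) = -Complex.I * ((2 * π / 3 : ℝ) : ℂ)
    by push_cast; ring] at h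

theorem one_add_ζ_add_ζ_sq : 1 + ζ + ζ ^ 2 = 0 := by
  simpa [Finset.sum_range_succ] using isPrimitiveRoot_ζ.geom_sum_eq_zero (by norm_num)

theorem norm_ζ : ‖ζ‖ = 1 := isPrimitiveRoot_ζ.norm'_eq_one (by norm_num)

theorem exp_neg_I_mul_two_pi_div_three_mul (m : ℕ) :
    Complex.exp (-Complex.I * ((2 * π / 3 * m : ℝ) : ℂ)) = ζ ^ m := by
  rw [ζ, ← Complex.exp_nat_mul]
  push_cast
  ring_nf

theorem exp_neg_I_mul_four_pi_div_three :
    Complex.exp (-Complex.I * ((4 * π / 3 : ℝ) : ℂ)) = ζ ^ 2 := by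
  rw [← exp_neg_I_mul_two_pi_div_three_mul]
  push_cast
  ring_nf

theorem mem_Rinf_iff {ρ : ℝ} {z : ℂ} :
    z ∈ Rinf ρ (2 * π / 3) ↔ ∃ (u : ℕ → ℝ) (k : ℕ → ℕ), (∀ j, u j = 0 ∨ u j = 1) ∧ k 0 = 0 ∧
      (∀ j, k (j + 1) = k j ∨ k (j + 1) = k j + 1) ∧
      z = ∑' j : ℕ, ((u (j + 1) / ρ ^ (j + 1) : ℝ) : ℂ) * ζ ^ k (j + 1) := by
  constructor
  · rintro ⟨u, v, hu, hv, rfl⟩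
    classical
    let k : ℕ → ℕ := fun j => ∑ n ∈ Finset.range j, if v (n + 1) = 1 then 1 else 0
    have hk : ∀ j, ∑ n ∈ Finset.range j, v (n + 1) = k j := fun j => by
      push_cast [k]
      exact Finset.sum_congr rfl fun n _ => by rcases hv (n + 1) with h | h <;> simp [h]
    refine ⟨u, k, hu, rfl, fun j => ?_, ?_⟩
    · simp only [k, Finset.sum_range_succ]
      split_ifs <;> simp
    · simp_rw [hk, exp_neg_I_mul_two_pi_div_three_mul]
  · rintro ⟨u, k, hu, hk0, hk, rfl⟩
    refine ⟨u, fun n => (k n : ℝ) - k (n - 1), hu, fun n => ?_, ?_⟩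
    · cases n with
      | zero => simp
      | succ n => rcases hk n with h | h <;> simp [h]
    · simp_rw [Nat.add_sub_cancel, Finset.sum_range_sub (fun n => (k n : ℝ)), hk0,
        Nat.cast_zero, sub_zero, exp_neg_I_mul_two_pi_div_three_mul]

theorem hasSum_one_div_pow_succ {ρ : ℝ} (hρ : 1 < ρ) :
    HasSum (fun j : ℕ => 1 / ρ ^ (j + 1)) (1 / (ρ - 1)) := by
  have hρ0 : 0 < ρ := by linarith
  have h := (hasSum_geometric_of_lt_one (inv_pos.2 hρ0).le (inv_lt_one_of_one_lt₀ hρ)).mul_left ρ⁻¹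
  rw [show ρ⁻¹ * (1 - ρ⁻¹)⁻¹ = 1 / (ρ - 1) by field_simp] at h
  simpa [← inv_pow, pow_succ] using h

theorem hasSum_ofReal_one_div_pow_succ_mul {ρ : ℝ} (hρ : 1 < ρ) (w : ℂ) :
    HasSum (fun j : ℕ => ((1 / ρ ^ (j + 1) : ℝ) : ℂ) * w) (w / ((ρ - 1 : ℝ) : ℂ)) := by
  have h := (Complex.hasSum_ofReal.2 (hasSum_one_div_pow_succ hρ)).mul_right w
  rwa [show ((1 / (ρ - 1) : ℝ) : ℂ) * w = w / ((ρ - 1 : ℝ) : ℂ) by push_cast; ring] at h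

theorem mem_Rinf_of_hasSum {ρ : ℝ} {u : ℕ → ℝ} (hu : ∀ j, u j = 0 ∨ u j = 1) (m : ℕ) {z : ℂ}
    (h : HasSum (fun j : ℕ => ((u (j + 1) / ρ ^ (j + 1) : ℝ) : ℂ) * ζ ^ min (j + 1) m) z) :
    z ∈ Rinf ρ (2 * π / 3) :=
  mem_Rinf_iff.2
    ⟨u, fun j => min j m, hu, Nat.zero_min m, fun j => by dsimp only; omega, h.tsum_eq.symm⟩

def hullVertices (ρ : ℝ) : Set ℂ :=
  {((1 / (ρ - 1) : ℝ) : ℂ), ζ / ((ρ - 1 : ℝ) : ℂ),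
    ζ / (ρ : ℂ) + ζ ^ 2 / ((ρ * (ρ - 1) : ℝ) : ℂ), ζ ^ 2 / ((ρ * (ρ - 1) : ℝ) : ℂ)}

theorem hullVertices_subset_Rinf {ρ : ℝ} (hρ : 1 < ρ) : hullVertices ρ ⊆ Rinf ρ (2 * π / 3) := by
  have hconst := hasSum_ofReal_one_div_pow_succ_mul hρ
  have htail : HasSum (fun j : ℕ => ((1 / ρ ^ (j + 1 + 1) : ℝ) : ℂ) * ζ ^ 2)
      (ζ ^ 2 / ((ρ * (ρ - 1) : ℝ) : ℂ)) := by
    have hρ0 : (ρ : ℂ) ≠ 0 := Complex.ofReal_ne_zero.2 (by positivity)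
    convert hconst (ζ ^ 2 / ρ) using 1
    · ext j
      push_cast
      field_simp
      ring
    · push_cast
      field_simp
  rintro z (rfl | rfl | rfl | rfl)
  · refine mem_Rinf_of_hasSum (u := 1) (fun _ => Or.inr rfl) 0 ?_
    simpa using hconst 1
  · refine mem_Rinf_of_hasSum (u := 1) (fun _ => Or.inr rfl) 1 ?_
    simpa using hconst ζ
  · refine mem_Rinf_of_hasSum (u := 1) (fun _ => Or.inr rfl) 2 ?_
    have h := HasSum.zero_add (f := fun j : ℕ => ((1 / ρ ^ (j + 1) : ℝ) : ℂ) * ζ ^ min (j + 1) 2)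
      (by simpa using htail)
    simpa [div_eq_inv_mul] using h
  · refine mem_Rinf_of_hasSum (u := fun j => if j = 1 then 0 else 1)
      (fun j => by split_ifs <;> simp) 2 ?_
    have h := HasSum.zero_add
      (f := fun j : ℕ => (((if j + 1 = 1 then 0 else 1) / ρ ^ (j + 1) : ℝ) : ℂ) * ζ ^ min (j + 1) 2)
      (by simpa using htail)
    simpa using h

/-- For a real functional `f`, `supportBound ρ (f (ζ ^ k)) (f (ζ ^ (k + 1))) (f (ζ ^ (k + 2)))` is
`ρ (ρ - 1)` times the maximum of `f` on `ζ ^ k • hullVertices ρ`. The two step lemmas are the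
support-function form of `ρ⁻¹ ζ ^ t (u + K) ⊆ K` for `t, u ∈ {0, 1}`, `K` the hull of the
vertices. -/
def supportBound (ρ a b d : ℝ) : ℝ := max (max (ρ * a) (ρ * b)) (max ((ρ - 1) * b + d) d)

section supportBound

variable {ρ a b d u : ℝ}

theorem supportBound_nonneg (hρ : 0 < ρ) (habd : a + b + d = 0) : 0 ≤ supportBound ρ a b d := by
  by_contra! h
  simp only [supportBound, max_lt_iff] at h
  nlinarith

theorem supportBound_step_stay (hρ : 1 < ρ) (habd : a + b + d = 0) (hu : u = 0 ∨ u = 1) :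
    u * a * (ρ * (ρ - 1)) + supportBound ρ a b d ≤ ρ * supportBound ρ a b d := by
  have hN : 0 ≤ supportBound ρ a b d := supportBound_nonneg (by linarith) habd
  have hA : ρ * a ≤ supportBound ρ a b d := le_max_of_le_left (le_max_left _ _)
  rcases hu with rfl | rfl <;> nlinarith

theorem supportBound_step_turn (hρ : 1 < ρ) (habd : a + b + d = 0) (hu : u = 0 ∨ u = 1) :
    u * b * (ρ * (ρ - 1)) + supportBound ρ b d a ≤ ρ * supportBound ρ a b d := by
  set N := supportBound ρ a b d
  have hρ1 : 0 < ρ - 1 := by linarith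
  have hN : 0 ≤ N := supportBound_nonneg (by linarith) habd
  have hA : ρ * a ≤ N := le_max_of_le_left (le_max_left _ _)
  have hB : ρ * b ≤ N := le_max_of_le_left (le_max_right _ _)
  have hC : (ρ - 1) * b + d ≤ N := le_max_of_le_right (le_max_left _ _)
  have hD : d ≤ N := le_max_of_le_right (le_max_right _ _)
  -- `a = (1 - ρ⁻¹) • 0 + ρ⁻¹ • (ρ a)` and `a + (ρ - 1) b = ρ⁻¹ • (ρ a) + (1 - ρ⁻¹) • (ρ b)`
  have ha : a ≤ N := by nlinarith
  have hab : a + (ρ - 1) * b ≤ N := by nlinarith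
  refine add_le_of_le_sub_left (max_le (max_le ?_ ?_) (max_le ?_ ?_)) <;>
    rcases hu with rfl | rfl <;>
    nlinarith [mul_le_mul_of_nonneg_left hC hρ1.le, mul_le_mul_of_nonneg_left hD hρ1.le]

end supportBound

theorem apply_ofReal_mul (f : StrongDual ℝ ℂ) (r : ℝ) (w : ℂ) : f (r * w) = r * f w := by
  rw [← Complex.real_smul, map_smul, smul_eq_mul]

theorem apply_div_ofReal (f : StrongDual ℝ ℂ) (w : ℂ) (r : ℝ) : f (w / r) = f w / r := by
  rw [div_eq_inv_mul, ← Complex.ofReal_inv, apply_ofReal_mul, inv_mul_eq_div]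

theorem exists_mem_hullVertices_supportBound_le {ρ : ℝ} (hρ : 1 < ρ) (f : StrongDual ℝ ℂ) :
    ∃ y ∈ hullVertices ρ, supportBound ρ (f 1) (f ζ) (f (ζ ^ 2)) ≤ f y * (ρ * (ρ - 1)) := by
  have hρ0 : ρ ≠ 0 := by positivity
  have hρ1 : ρ - 1 ≠ 0 := by linarith
  by_contra! h
  simp only [hullVertices, Set.mem_insert_iff, Set.mem_singleton_iff, forall_eq_or_imp,
    forall_eq, map_add, apply_div_ofReal] at h
  obtain ⟨h1, h2, h3, h4⟩ := h
  rw [← mul_one (((1 / (ρ - 1) : ℝ) : ℂ)), apply_ofReal_mul] at h1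
  field_simp at h1 h2 h3 h4
  exact (max_lt (max_lt h1 h2) (max_lt h3 h4)).false

theorem apply_mul_le_supportBound_of_mem_Rinf {ρ : ℝ} (hρ : 1 < ρ) (f : StrongDual ℝ ℂ) {z : ℂ}
    (hz : z ∈ Rinf ρ (2 * π / 3)) :
    f z * (ρ * (ρ - 1)) ≤ supportBound ρ (f 1) (f ζ) (f (ζ ^ 2)) := by
  obtain ⟨u, k, hu, hk0, hk, rfl⟩ := mem_Rinf_iff.1 hz
  set c : ℕ → ℝ := fun m => f (ζ ^ m)
  have hc3 : ∀ m, c (m + 3) = c m := fun m => by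
    simp only [c, pow_add, isPrimitiveRoot_ζ.pow_eq_one, mul_one]
  have hc : ∀ m, c m + c (m + 1) + c (m + 2) = 0 := fun m => by
    simp only [c, ← map_add]
    rw [show ζ ^ m + ζ ^ (m + 1) + ζ ^ (m + 2) = ζ ^ m * (1 + ζ + ζ ^ 2) by ring,
      one_add_ζ_add_ζ_sq, mul_zero, map_zero]
  have hsummable : Summable fun j : ℕ => ((u (j + 1) / ρ ^ (j + 1) : ℝ) : ℂ) * ζ ^ k (j + 1) := by
    refine (hasSum_one_div_pow_succ hρ).summable.of_norm_bounded fun j => ?_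
    rw [norm_mul, norm_pow, norm_ζ, one_pow, mul_one, Complex.norm_real, Real.norm_eq_abs]
    have hρj : 0 < ρ ^ (j + 1) := pow_pos (by linarith) _
    rcases hu (j + 1) with h | h <;> simp [h, abs_of_pos hρj, hρj.le]
  have hf := (hsummable.hasSum.mapL f).mul_right (ρ * (ρ - 1))
  simp only [apply_ofReal_mul] at hf
  rw [show (fun j => u (j + 1) / ρ ^ (j + 1) * c (k (j + 1)) * (ρ * (ρ - 1))) =
    fun j => u (j + 1) * c (k (j + 1)) * (ρ * (ρ - 1)) / ρ ^ (j + 1) from funext fun j => by ring]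
    at hf
  have hstep : ∀ n, u (n + 1) * c (k (n + 1)) * (ρ * (ρ - 1)) +
      supportBound ρ (c (k (n + 1))) (c (k (n + 1) + 1)) (c (k (n + 1) + 2)) ≤
      ρ * supportBound ρ (c (k n)) (c (k n + 1)) (c (k n + 2)) := fun n => by
    rcases hk n with h | h <;> rw [h]
    · exact supportBound_step_stay hρ (hc _) (hu _)
    · rw [show k n + 1 + 2 = k n + 3 by ring, hc3]
      exact supportBound_step_turn hρ (hc _) (hu _)
  have hle := le_of_hasSum_div_pow (by linarith)
    (fun n => supportBound_nonneg (by linarith) (hc _)) hstep hf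
  simpa [hk0, c] using hle

theorem Rinf_subset_convexHull_hullVertices {ρ : ℝ} (hρ : 1 < ρ) :
    Rinf ρ (2 * π / 3) ⊆ convexHull ℝ (hullVertices ρ) := fun z hz =>
  mem_convexHull_of_forall_exists_le (by unfold hullVertices; exact Set.toFinite _) fun f => by
    obtain ⟨y, hy, hfy⟩ := exists_mem_hullVertices_supportBound_le hρ f
    exact ⟨y, hy, le_of_mul_le_mul_right ((apply_mul_le_supportBound_of_mem_Rinf hρ f hz).trans hfy)
      (mul_pos (by linarith) (by linarith))⟩

theorem convexHull_Rinf (ρ : ℝ) (hρ : 1 < ρ) :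
    convexHull ℝ (Rinf ρ (2 * π / 3)) =
      convexHull ℝ
        ({((1 / (ρ - 1) : ℝ) : ℂ),
          Complex.exp (-Complex.I * ((2 * π / 3 : ℝ) : ℂ)) / ((ρ - 1 : ℝ) : ℂ),
          Complex.exp (-Complex.I * ((2 * π / 3 : ℝ) : ℂ)) / (ρ : ℂ) +
            Complex.exp (-Complex.I * ((4 * π / 3 : ℝ) : ℂ)) / ((ρ * (ρ - 1) : ℝ) : ℂ),
          Complex.exp (-Complex.I * ((4 * π / 3 : ℝ) : ℂ)) / ((ρ * (ρ - 1) : ℝ) : ℂ)} : Set ℂ) := by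
  rw [exp_neg_I_mul_four_pi_div_three]
  exact le_antisymm
    (convexHull_min (Rinf_subset_convexHull_hullVertices hρ) (convex_convexHull ℝ _))
    (convexHull_mono (hullVertices_subset_Rinf hρ))
end

section
/- If ω = 2π/3 (so consecutive phalanxes form angle π/3) and ρ ≥ 2, then no configuration of the finger is self-intersecting: for any finite binary control sequences, no phalanx segment [x_{k}, x_{k+1}] with k ≥ 1 (and x_{k+1} ≠ x_k) intersects the interior of the first phalanx segment [0, 1/ρ]. -/
/-!
Every phalanx points in one of the directions `1, e^{±2πi/3}`, so the imaginary part of the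
`j`-th one is `0` or `±(√3/2) ρ^{-(j+1)}`, and a horizontal phalanx points in direction `1`.
Along `[x_k, x_{k+1}]` the imaginary part is therefore a signed sum of powers of `1/ρ ≤ 1/2` in
which the first nonzero term outweighs all later ones, so it vanishes only if every phalanx
before the `k`-th is horizontal. Then `x_k` is real and `≥ 1/ρ`, and so is every real point of
the segment: none lies on the open first phalanx.
-/

open Real Finset

theorem exists_nat_sum_eq {ι : Type*} (s : Finset ι) {v : ι → ℝ} (hv : ∀ i, v i = 0 ∨ v i = 1) :
    ∃ m : ℕ, ∑ i ∈ s, v i = m := by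
  induction s using Finset.cons_induction with
  | empty => exact ⟨0, by simp⟩
  | cons i s hi ih =>
    obtain ⟨m, hm⟩ := ih
    rcases hv i with h | h
    · exact ⟨m, by simp [h, hm]⟩
    · exact ⟨m + 1, by simp [h, hm, add_comm]⟩

theorem sin_two_pi_div_three_mul_nat (m : ℕ) :
    (sin (2 * π / 3 * m) = 0 ∧ cos (2 * π / 3 * m) = 1) ∨ |sin (2 * π / 3 * m)| = √3 / 2 := by
  obtain ⟨q, i, hi, rfl⟩ : ∃ q i, i < 3 ∧ m = i + 3 * q :=
    ⟨m / 3, m % 3, Nat.mod_lt _ (by norm_num), (Nat.mod_add_div m 3).symm⟩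
  have hθ : 2 * π / 3 * ((i + 3 * q : ℕ) : ℝ) = 2 * π / 3 * i + q * (2 * π) := by push_cast; ring
  rw [hθ, sin_add_nat_mul_two_pi, cos_add_nat_mul_two_pi]
  interval_cases i
  · simp
  · right
    rw [show 2 * π / 3 * ((1 : ℕ) : ℝ) = π - π / 3 by push_cast; ring, sin_pi_sub,
      sin_pi_div_three, abs_of_nonneg (by positivity)]
  · right
    rw [show 2 * π / 3 * ((2 : ℕ) : ℝ) = π / 3 + π by push_cast; ring, sin_add_pi,
      sin_pi_div_three, abs_neg, abs_of_nonneg (by positivity)]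

theorem re_ofReal_mul_exp_neg_I_mul (a θ : ℝ) :
    ((a : ℂ) * Complex.exp (-Complex.I * θ)).re = a * cos θ := by
  simp [Complex.exp_re, Complex.mul_re]

theorem im_ofReal_mul_exp_neg_I_mul (a θ : ℝ) :
    ((a : ℂ) * Complex.exp (-Complex.I * θ)).im = -(a * sin θ) := by
  simp [Complex.exp_im, Complex.mul_im]

theorem im_ofReal_mul_exp_eq_zero_or_abs_eq {a : ℝ} (ha : 0 ≤ a) (m : ℕ) :
    ((a : ℂ) * Complex.exp (-Complex.I * ((2 * π / 3 * m : ℝ) : ℂ))).im = 0 ∨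
      |((a : ℂ) * Complex.exp (-Complex.I * ((2 * π / 3 * m : ℝ) : ℂ))).im| = √3 / 2 * a := by
  rw [im_ofReal_mul_exp_neg_I_mul]
  rcases sin_two_pi_div_three_mul_nat m with ⟨hs, -⟩ | hs
  · left; simp [hs]
  · right; rw [abs_neg, abs_mul, hs, abs_of_nonneg ha, mul_comm]

theorem re_nonneg_of_im_ofReal_mul_exp_eq_zero {a : ℝ} (ha : 0 ≤ a) (m : ℕ)
    (h : ((a : ℂ) * Complex.exp (-Complex.I * ((2 * π / 3 * m : ℝ) : ℂ))).im = 0) :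
    0 ≤ ((a : ℂ) * Complex.exp (-Complex.I * ((2 * π / 3 * m : ℝ) : ℂ))).re := by
  rw [im_ofReal_mul_exp_neg_I_mul, neg_eq_zero] at h
  rw [re_ofReal_mul_exp_neg_I_mul]
  rcases sin_two_pi_div_three_mul_nat m with ⟨-, hc⟩ | hs
  · rw [hc, mul_one]; exact ha
  · have ha0 : a = 0 := (mul_eq_zero.1 h).resolve_right fun h0 => by
      rw [h0, abs_zero] at hs; exact (by positivity : (0 : ℝ) < √3 / 2).ne hs
    rw [ha0, zero_mul]

-- The slack `r ^ n` is what makes the induction go through, and it makes the bound strict below.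
theorem geom_sum_Ico_add_two_mul_pow_le {r : ℝ} (hr0 : 0 ≤ r) (hr : r ≤ 1 / 2) {a n : ℕ}
    (han : a < n) : ∑ j ∈ Ico (a + 1) n, r ^ j + 2 * r ^ n ≤ r ^ a := by
  induction n, han using Nat.le_induction with
  | base => simp only [Ico_self, sum_empty, zero_add, pow_succ]; nlinarith [pow_nonneg hr0 a]
  | succ n han ih =>
    rw [sum_Ico_succ_top han, pow_succ]
    nlinarith [pow_nonneg hr0 n]

theorem eq_zero_of_sum_range_add_mul_eq_zero {r c : ℝ} (hr0 : 0 < r) (hr : r ≤ 1 / 2)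
    {b : ℕ → ℝ} (hb : ∀ j, b j = 0 ∨ |b j| = c * r ^ j) {n : ℕ} {s : ℝ} (hs : |s| ≤ 1)
    (hsum : ∑ j ∈ range n, b j + s * b n = 0) : ∀ j < n, b j = 0 := by
  by_contra! hne
  classical
  let j₀ := Nat.find hne
  obtain ⟨hj₀n, hj₀⟩ : j₀ < n ∧ b j₀ ≠ 0 := Nat.find_spec hne
  have hbefore : ∑ j ∈ range j₀, b j = 0 :=
    sum_eq_zero fun j hj => by_contra fun h =>
      Nat.find_min hne (mem_range.1 hj) ⟨(mem_range.1 hj).trans hj₀n, h⟩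
  have hsplit : ∑ j ∈ range n, b j = b j₀ + ∑ j ∈ Ico (j₀ + 1) n, b j := by
    rw [← sum_range_add_sum_Ico _ hj₀n, sum_range_succ, hbefore, zero_add]
  have hj₀abs : |b j₀| = c * r ^ j₀ := (hb j₀).resolve_left hj₀
  have hc : 0 < c := by
    have := abs_pos.2 hj₀; rw [hj₀abs] at this; exact pos_of_mul_pos_left this (by positivity)
  have hbound : ∀ j, |b j| ≤ c * r ^ j := fun j => by
    rcases hb j with h | h <;> simp [h]; positivity
  have htail : |∑ j ∈ Ico (j₀ + 1) n, b j + s * b n| < c * r ^ j₀ :=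
    calc |∑ j ∈ Ico (j₀ + 1) n, b j + s * b n|
        ≤ ∑ j ∈ Ico (j₀ + 1) n, |b j| + |b n| := by
          refine (abs_add_le _ _).trans (add_le_add (abs_sum_le_sum_abs _ _) ?_)
          rw [abs_mul]; exact mul_le_of_le_one_left (abs_nonneg _) hs
      _ ≤ c * (∑ j ∈ Ico (j₀ + 1) n, r ^ j + r ^ n) := by
          rw [mul_add, mul_sum]; exact add_le_add (sum_le_sum fun j _ => hbound j) (hbound n)
      _ < c * r ^ j₀ := by
          have := geom_sum_Ico_add_two_mul_pow_le hr0.le hr hj₀n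
          have : 0 < r ^ n := by positivity
          gcongr; linarith
  rw [hsplit, add_assoc, add_eq_zero_iff_eq_neg] at hsum
  rw [hsum, abs_neg] at hj₀abs
  linarith

theorem segment_sum_range_inter_openSegment_eq_empty {w : ℕ → ℂ} {c r δ : ℝ} (hr0 : 0 < r)
    (hr : r ≤ 1 / 2) (him : ∀ j, (w j).im = 0 ∨ |(w j).im| = c * r ^ j)
    (hre : ∀ j, (w j).im = 0 → 0 ≤ (w j).re) (hδ : 0 < δ) (hw0 : w 0 = δ) {k : ℕ} (hk : 1 ≤ k) :
    segment ℝ (∑ j ∈ range k, w j) (∑ j ∈ range (k + 1), w j) ∩ openSegment ℝ 0 (δ : ℂ) = ∅ := by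
  rw [Set.eq_empty_iff_forall_notMem]
  rintro z ⟨hz_seg, hz_open⟩
  rw [segment_eq_image', sum_range_succ, add_sub_cancel_left] at hz_seg
  obtain ⟨s, ⟨hs0, hs1⟩, rfl⟩ := hz_seg
  rw [openSegment_eq_image] at hz_open
  obtain ⟨t, ⟨-, ht1⟩, ht⟩ := hz_open
  simp only [smul_zero, zero_add, Complex.real_smul] at ht
  have him_sum : ∑ j ∈ range k, (w j).im + s * (w k).im = 0 := by
    simpa [Complex.im_sum] using (congrArg Complex.im ht).symm
  have hre_sum : ∑ j ∈ range k, (w j).re + s * (w k).re < δ := by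
    have := congrArg Complex.re ht
    simp [Complex.re_sum] at this
    nlinarith
  have hhor : ∀ j < k, (w j).im = 0 :=
    eq_zero_of_sum_range_add_mul_eq_zero hr0 hr him (abs_le.2 ⟨by linarith, hs1⟩) him_sum
  have hstart : δ ≤ ∑ j ∈ range k, (w j).re := by
    have hre0 : (w 0).re = δ := by simp [hw0]
    exact hre0 ▸ single_le_sum (fun j hj => hre j (hhor j (mem_range.1 hj))) (mem_range.2 hk)
  have hlast : 0 ≤ s * (w k).re := by
    rw [sum_eq_zero fun j hj => hhor j (mem_range.1 hj), zero_add] at him_sum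
    rcases mul_eq_zero.1 him_sum with h | h
    · simp [h]
    · exact mul_nonneg hs0 (hre k h)
  linarith

theorem no_self_intersection_general (ρ : ℝ) (hρ : 2 ≤ ρ)
    (u v : ℕ → ℝ) (hu : ∀ j, u j = 0 ∨ u j = 1) (hv : ∀ j, v j = 0 ∨ v j = 1)
    (hu1 : u 1 = 1) (hv1 : v 1 = 0)
    (x : ℕ → ℂ)
    (hx : ∀ k, x k = ∑ j ∈ Finset.range k,
      ((u (j + 1) / ρ ^ (j + 1) : ℝ) : ℂ) *
        Complex.exp (-Complex.I * (((2 * π / 3) * ∑ n ∈ Finset.range (j + 1), v (n + 1) : ℝ) : ℂ)))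
    (k : ℕ) (hk : 1 ≤ k) :
    segment ℝ (x k) (x (k + 1)) ∩ openSegment ℝ (0 : ℂ) ((1 / ρ : ℝ) : ℂ) = ∅ := by
  have hρ0 : 0 < ρ := by linarith
  set a : ℕ → ℝ := fun j => u (j + 1) / ρ ^ (j + 1)
  set w : ℕ → ℂ := fun j => (a j : ℂ) *
    Complex.exp (-Complex.I * (((2 * π / 3) * ∑ n ∈ Finset.range (j + 1), v (n + 1) : ℝ) : ℂ))
  have ha0 : ∀ j, 0 ≤ a j := fun j =>
    div_nonneg (by rcases hu (j + 1) with h | h <;> simp [h]) (by positivity)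
  have hw : ∀ j, ∃ m : ℕ,
      w j = (a j : ℂ) * Complex.exp (-Complex.I * ((2 * π / 3 * m : ℝ) : ℂ)) := fun j =>
    (exists_nat_sum_eq (range (j + 1)) fun n => hv (n + 1)).imp fun m hm => by simp only [w, hm]
  have him : ∀ j, (w j).im = 0 ∨ |(w j).im| = √3 / 2 / ρ * (1 / ρ) ^ j := by
    intro j
    obtain ⟨m, hm⟩ := hw j
    rcases hu (j + 1) with hu0 | hu0
    · left; simp [hm, a, hu0]
    · rw [hm]
      refine (im_ofReal_mul_exp_eq_zero_or_abs_eq (ha0 j) m).imp_right fun h => ?_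
      rw [h]
      simp only [a, hu0, pow_succ, one_div_pow]
      field_simp
  have hre : ∀ j, (w j).im = 0 → 0 ≤ (w j).re := fun j => by
    obtain ⟨m, hm⟩ := hw j
    rw [hm]
    exact re_nonneg_of_im_ofReal_mul_exp_eq_zero (ha0 j) m
  have hw0 : w 0 = ((1 / ρ : ℝ) : ℂ) := by simp [w, a, hu1, hv1]
  rw [hx, hx]
  exact segment_sum_range_inter_openSegment_eq_empty (by positivity)
    (one_div_le_one_div_of_le two_pos hρ) him hre (by positivity) hw0 hk

theorem no_self_intersection (ρ : ℝ) (hρ : 2 ≤ ρ)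
    (u v : ℕ → ℝ) (hu : ∀ j, u j = 0 ∨ u j = 1) (hv : ∀ j, v j = 0 ∨ v j = 1)
    (hu1 : u 1 = 1) (hv1 : v 1 = 0)
    (x : ℕ → ℂ)
    (hx : ∀ k, x k = ∑ j ∈ Finset.range k,
      ((u (j + 1) / ρ ^ (j + 1) : ℝ) : ℂ) *
        Complex.exp (-Complex.I * (((2 * π / 3) * ∑ n ∈ Finset.range (j + 1), v (n + 1) : ℝ) : ℂ)))
    (k : ℕ) (hk : 1 ≤ k) (hne : x (k + 1) ≠ x k) :
    segment ℝ (x k) (x (k + 1)) ∩ openSegment ℝ (0 : ℂ) ((1 / ρ : ℝ) : ℂ) = ∅ :=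
  no_self_intersection_general ρ hρ u v hu hv hu1 hv1 x hx k hk
end

section
/- If ω = 2π/3 and 1 < ρ < 2, then there exists a self-intersecting configuration: for all sufficiently large J, the full-extension configuration with controls u_j = 1 for all j ≤ J, v₁ = 0, v₂ = v₃ = 1, and v_j = 0 for 4 ≤ j ≤ J, has some later phalanx segment intersecting the first phalanx segment [0, 1/ρ]. -/
/-!
Put `a = 1/ρ ∈ (1/2, 1)` and `ζ = e^{-2πi/3}`. The first two phalanges end at `x₂ = a + a²ζ` and
every later phalanx points in direction `ζ²`. Since `1 + ζ + ζ² = 0`, the ray from `x₂` in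
direction `ζ²` meets the first phalanx at `a - a²` after length `a²`, while the remaining phalanges
have total length `a³/(1 - a) > a²` (this is `a > 1/2`). So some later phalanx `[x_k, x_{k+1}]`
passes through `a - a²`.
-/

open Real Finset Complex

theorem exists_le_le_succ_of_le_of_lt {α : Type*} [LinearOrder α] {t : ℕ → α} {s : α}
    (h₀ : t 0 ≤ s) : ∀ {N : ℕ}, s < t N → ∃ n < N, t n ≤ s ∧ s ≤ t (n + 1)
  | 0, hN => absurd h₀ hN.not_ge
  | N + 1, hN => by
    by_cases h : s < t N
    · obtain ⟨n, hn, hn'⟩ := exists_le_le_succ_of_le_of_lt h₀ h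
      exact ⟨n, by omega, hn'⟩
    · exact ⟨N, N.lt_succ_self, not_lt.1 h, hN.le⟩

theorem add_smul_mem_segment {𝕜 E : Type*} [Field 𝕜] [LinearOrder 𝕜] [IsStrictOrderedRing 𝕜]
    [AddCommGroup E] [Module 𝕜 E] (p d : E) {t₁ s t₂ : 𝕜} (h₁ : t₁ ≤ s) (h₂ : s ≤ t₂) :
    p + s • d ∈ segment 𝕜 (p + t₁ • d) (p + t₂ • d) := by
  have hf (r : 𝕜) : AffineMap.lineMap p (p + d) r = p + r • d := by
    rw [AffineMap.lineMap_apply_module', add_sub_cancel_left, add_comm]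
  have hs : s ∈ segment 𝕜 t₁ t₂ := by rw [segment_eq_Icc (h₁.trans h₂)]; exact ⟨h₁, h₂⟩
  have h := Set.mem_image_of_mem (AffineMap.lineMap p (p + d)) hs
  rwa [image_segment, hf, hf, hf] at h

theorem sum_range_succ_ite_eq_min (j : ℕ) :
    ∑ n ∈ range (j + 1), (if n + 1 = 2 ∨ n + 1 = 3 then (1 : ℝ) else 0) = min j 2 := by
  induction j with
  | zero => simp
  | succ j ih =>
    rw [sum_range_succ, ih]
    rcases lt_trichotomy j 1 with h | rfl | h
    · obtain rfl : j = 0 := by omega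
      norm_num
    · norm_num
    · rw [if_neg (by omega), min_eq_right (by omega), min_eq_right (by omega)]
      norm_num

theorem isPrimitiveRoot_exp_neg_two_pi_div_three :
    IsPrimitiveRoot (cexp (-I * ((2 * π / 3 : ℝ) : ℂ))) 3 := by
  have h := (Complex.isPrimitiveRoot_exp 3 (by norm_num)).inv
  rwa [← Complex.exp_neg, show -(2 * π * I / (3 : ℕ)) = -I * ((2 * π / 3 : ℝ) : ℂ) by
    push_cast; ring] at h

theorem IsPrimitiveRoot.one_add_add_sq_eq_zero {R : Type*} [CommRing R] [IsDomain R] {ζ : R}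
    (hζ : IsPrimitiveRoot ζ 3) : 1 + ζ + ζ ^ 2 = 0 := by
  simpa [sum_range_succ] using hζ.geom_sum_eq_zero (by norm_num)

theorem sum_range_add_two_pow_mul_pow_min {R : Type*} [CommSemiring R] (a ζ : R) (n : ℕ) :
    ∑ j ∈ range (2 + n), a ^ (j + 1) * ζ ^ min j 2 =
      a + a ^ 2 * ζ + (∑ i ∈ range n, a ^ (i + 3)) * ζ ^ 2 := by
  have hexp (i : ℕ) : 2 + i + 1 = i + 3 := by omega
  simp [sum_range_add, sum_mul, hexp, sum_range_succ]

theorem exists_lt_sum_range_pow {a : ℝ} (h₁ : 1 / 2 < a) (h₂ : a < 1) :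
    ∃ N, a ^ 2 < ∑ i ∈ range N, a ^ (i + 3) := by
  have hsum : HasSum (fun i => a ^ 3 * a ^ i) (a ^ 3 * (1 - a)⁻¹) :=
    (hasSum_geometric_of_lt_one (by linarith) h₂).mul_left _
  have hlt : a ^ 2 < a ^ 3 * (1 - a)⁻¹ := by
    rw [← div_eq_mul_inv, lt_div_iff₀ (by linarith)]
    nlinarith [pow_pos (show 0 < a by linarith) 2]
  obtain ⟨N, hN⟩ := (hsum.tendsto_sum_nat.eventually (lt_mem_nhds hlt)).exists
  exact ⟨N, by simpa only [pow_add, mul_comm] using hN⟩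

theorem self_intersecting_configuration (ρ : ℝ) (h1 : 1 < ρ) (h2 : ρ < 2)
    (x : ℕ → ℂ)
    (hx : ∀ k, x k = ∑ j ∈ Finset.range k,
      ((1 / ρ ^ (j + 1) : ℝ) : ℂ) *
        Complex.exp (-Complex.I *
          (((2 * π / 3) * ∑ n ∈ Finset.range (j + 1),
            (if n + 1 = 2 ∨ n + 1 = 3 then (1 : ℝ) else 0) : ℝ) : ℂ))) :
    ∃ J₀ : ℕ, ∀ J ≥ J₀, ∃ k, 2 ≤ k ∧ k + 1 ≤ J ∧
      (segment ℝ (x k) (x (k + 1)) ∩ segment ℝ (0 : ℂ) ((1 / ρ : ℝ) : ℂ)).Nonempty := by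
  set a : ℝ := 1 / ρ with ha
  have ha_half : 1 / 2 < a := by rw [ha, div_lt_div_iff₀ two_pos (by linarith)]; linarith
  have ha_one : a < 1 := by rw [ha, div_lt_one (by linarith)]; exact h1
  set ζ := cexp (-I * ((2 * π / 3 : ℝ) : ℂ))
  have hζ : 1 + ζ + ζ ^ 2 = 0 := isPrimitiveRoot_exp_neg_two_pi_div_three.one_add_add_sq_eq_zero
  have hdir (m : ℕ) : cexp (-I * ((2 * π / 3 * (m : ℝ) : ℝ) : ℂ)) = ζ ^ m := by
    rw [← Complex.exp_nat_mul]; congr 1; push_cast; ring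
  set t : ℕ → ℝ := fun n => ∑ i ∈ range n, a ^ (i + 3) with ht
  have hpos (n : ℕ) : x (2 + n) = a + a ^ 2 * ζ + (t n : ℂ) * ζ ^ 2 := by
    simp only [hx, sum_range_succ_ite_eq_min, hdir, ← one_div_pow, ← ha, ht]
    push_cast
    exact sum_range_add_two_pow_mul_pow_min _ _ n
  obtain ⟨N, hN⟩ := exists_lt_sum_range_pow ha_half ha_one
  obtain ⟨n, hnN, hn, hn'⟩ := exists_le_le_succ_of_le_of_lt (t := t) (by simp [t]; positivity) hN
  refine ⟨2 + N, fun J hJ => ⟨2 + n, by omega, by omega, ((a - a ^ 2 : ℝ) : ℂ), ?_, ?_⟩⟩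
  · have hp : ((a - a ^ 2 : ℝ) : ℂ) = (a + a ^ 2 * ζ : ℂ) + a ^ 2 • ζ ^ 2 := by
      rw [Complex.real_smul]; push_cast; linear_combination (-(a : ℂ) ^ 2) * hζ
    rw [hp, hpos, show 2 + n + 1 = 2 + (n + 1) by omega, hpos]
    simpa only [Complex.real_smul] using add_smul_mem_segment _ (ζ ^ 2) hn hn'
  · have h := add_smul_mem_segment (0 : ℂ) 1 (t₁ := 0) (s := a - a ^ 2) (t₂ := a)
      (by nlinarith) (by nlinarith)
    simpa only [zero_add, zero_smul, Complex.real_smul, mul_one] using h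
end
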